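/- Let n and m both be even with n, m ≥ 2. Then lc(P_n × P_m) = mn + 1 − (m+n)/2 − min(m,n)/2. -/

import Mathlib

open SimpleGraph

def shareVertex {V : Type*} (e f : Sym2 V) : Prop := ∃ v, v ∈ e ∧ v ∈ f

def SuperLineComplete {V : Type*} (G : SimpleGraph V) (r : ℕ) : Prop :=
  ∀ A B : Finset (Sym2 V), ↑A ⊆ G.edgeSet → ↑B ⊆ G.edgeSet →
    A.card = r → B.card = r → A ≠ B →
    ∃ e ∈ A, ∃ f ∈ B, e ≠ f ∧ shareVertex e f

def lcIs {V : Type*} (G : SimpleGraph V) (k : ℕ) : Prop :=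
  IsLeast {r : ℕ | 0 < r ∧ SuperLineComplete G r} k

def gridGraph (n m : ℕ) : SimpleGraph (Fin n × Fin m) :=
  (pathGraph n).boxProd (pathGraph m)

/-!
Upper bound, for `n ≤ m`. If two distinct `r`-sets `A`, `B` of edges had no touching pair, then
`X = A \ B`, `Y = B \ A` and `C = A ∩ B` would have pairwise disjoint vertex supports `S`, `T`,
`U`, and `C` would be a matching, so `2 |C| ≤ mn - |S| - |T|`. Charging every grid edge to its
upper end (tagged horizontal or vertical) shows that the edges inside a vertex set meeting `a`
rows and `b` columns number at most `2 |S| - a - b`; moreover `S` and `T` lie in their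
`a × b` and `c × d` frames, whose overlap has at least `(a + c - n)(b + d - m)` cells. A case
analysis of these inequalities gives `2 r ≤ 2mn - m - 2n`.

Lower bound, for even `m`. The left and right halves of the grid are vertex-disjoint copies of
`P_n × P_{m/2}`, which has `mn - n - m/2` edges; `r` edges from each half form two `r`-sets with
no touching pair.
-/

open Finset

lemma shareVertex_comm {V : Type*} {e f : Sym2 V} : shareVertex e f ↔ shareVertex f e :=
  exists_congr fun _ => and_comm

section EdgeSupport

variable {V : Type*} [DecidableEq V]

def edgeSupport (X : Finset (Sym2 V)) : Finset V := X.biUnion Sym2.toFinset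

@[simp]
lemma mem_edgeSupport {X : Finset (Sym2 V)} {v : V} : v ∈ edgeSupport X ↔ ∃ e ∈ X, v ∈ e := by
  simp [edgeSupport]

lemma disjoint_edgeSupport {X Y : Finset (Sym2 V)}
    (h : ∀ e ∈ X, ∀ f ∈ Y, ¬ shareVertex e f) : Disjoint (edgeSupport X) (edgeSupport Y) := by
  simp only [Finset.disjoint_left, mem_edgeSupport]
  rintro v ⟨e, he, hve⟩ ⟨f, hf, hvf⟩
  exact h e he f hf ⟨v, hve, hvf⟩

lemma card_edgeSupport_of_pairwise {G : SimpleGraph V} {X : Finset (Sym2 V)}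
    (hX : ↑X ⊆ G.edgeSet) (h : (X : Set (Sym2 V)).Pairwise fun e f => ¬ shareVertex e f) :
    #(edgeSupport X) = 2 * #X := by
  rw [edgeSupport, card_biUnion, sum_const_nat, mul_comm]
  · exact fun e he => Sym2.card_toFinset_of_not_isDiag e (G.not_isDiag_of_mem_edgeSet (hX he))
  · intro e he f hf hef
    simp only [Function.onFun, Finset.disjoint_left, Sym2.mem_toFinset]
    exact fun v hve hvf => h he hf hef ⟨v, hve, hvf⟩

lemma Finset.Nonempty.edgeSupport {X : Finset (Sym2 V)} (hX : X.Nonempty) :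
    (edgeSupport X).Nonempty := by
  obtain ⟨e, he⟩ := hX
  induction e using Sym2.ind with
  | _ u v => exact ⟨u, mem_edgeSupport.2 ⟨_, he, Sym2.mem_mk_left u v⟩⟩

end EdgeSupport

lemma card_image_add_card_filter_exists_lt_le {V ι κ : Type*} [DecidableEq ι]
    [LinearOrder κ] (S : Finset V) (f : V → ι) (g : V → κ) :
    #(S.image f) + #(S.filter fun v => ∃ w ∈ S, f w = f v ∧ g w < g v) ≤ #S := by
  have hsplit := card_filter_add_card_filter_not (s := S) (fun v => ∃ w ∈ S, f w = f v ∧ g w < g v)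
  suffices #(S.image f) ≤ #(S.filter fun v => ¬ ∃ w ∈ S, f w = f v ∧ g w < g v) by omega
  refine card_le_card_of_surjOn f ?_
  intro i hi
  obtain ⟨v, hv, rfl⟩ := mem_image.1 hi
  obtain ⟨w, hw, hmin⟩ := exists_min_image (S.filter (f · = f v)) g ⟨v, by simp [hv]⟩
  rw [mem_filter] at hw
  refine ⟨w, ?_, hw.2⟩
  simp only [coe_filter, Set.mem_ofPred_eq, not_exists, not_and, not_lt]
  exact ⟨hw.1, fun u hu hfu => hmin u (mem_filter.2 ⟨hu, hfu.trans hw.2⟩)⟩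

lemma inf_covBy_sup_of_mem_edgeSet_hasse {α : Type*} [Lattice α] {e : Sym2 α}
    (he : e ∈ (hasse α).edgeSet) :
    e.inf ⋖ e.sup ∧ s(e.inf, e.sup) = e := by
  induction e using Sym2.ind with
  | _ u v =>
    rcases he with h | h
    · simpa [h.le] using h
    · simp [h.le, Sym2.eq_swap, h]

section ProductOfChains

variable {α β : Type*} [LinearOrder α] [LinearOrder β]

lemma hasse_prod_edge_eq_of_sup_eq {e f : Sym2 (α × β)} (he : e ∈ (hasse (α × β)).edgeSet)
    (hf : f ∈ (hasse (α × β)).edgeSet) (hsup : e.sup = f.sup)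
    (hdir : e.inf.1 = e.sup.1 ↔ f.inf.1 = f.sup.1) : e = f := by
  obtain ⟨hecov, hee⟩ := inf_covBy_sup_of_mem_edgeSet_hasse he
  obtain ⟨hfcov, hff⟩ := inf_covBy_sup_of_mem_edgeSet_hasse hf
  rw [Prod.covBy_iff] at hecov hfcov
  suffices e.inf = f.inf by rw [← hee, ← hff, this, hsup]
  rcases hecov with ⟨he1, he2⟩ | ⟨he2, he1⟩ <;> rcases hfcov with ⟨hf1, hf2⟩ | ⟨hf2, hf1⟩
  · rw [hsup] at he1 he2
    exact Prod.ext (he1.unique_left hf1) (he2.trans hf2.symm)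
  · exact absurd (hdir.2 hf1) he1.ne
  · exact absurd (hdir.1 he1) hf1.ne
  · rw [hsup] at he1 he2
    exact Prod.ext (he1.trans hf1.symm) (he2.unique_left hf2)

variable [DecidableEq α] [DecidableEq β]

lemma card_add_card_image_fst_add_card_image_snd_le (X : Finset (Sym2 (α × β)))
    (S : Finset (α × β)) (hX : ↑X ⊆ (hasse (α × β)).edgeSet) (hXS : ∀ e ∈ X, ∀ v ∈ e, v ∈ S) :
    #X + #(S.image Prod.fst) + #(S.image Prod.snd) ≤ 2 * #S := by
  set R := S.filter fun v => ∃ w ∈ S, w.1 = v.1 ∧ w.2 < v.2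
  set C := S.filter fun v => ∃ w ∈ S, w.2 = v.2 ∧ w.1 < v.1
  have hR : #(S.image Prod.fst) + #R ≤ #S :=
    card_image_add_card_filter_exists_lt_le S Prod.fst Prod.snd
  have hC : #(S.image Prod.snd) + #C ≤ #S :=
    card_image_add_card_filter_exists_lt_le S Prod.snd Prod.fst
  let φ : Sym2 (α × β) → (α × β) ⊕ (α × β) := fun e =>
    if e.inf.1 = e.sup.1 then .inl e.sup else .inr e.sup
  have hmaps : Set.MapsTo φ X (R.disjSum C) := by
    intro e he
    obtain ⟨hcov, hinfsup⟩ := inf_covBy_sup_of_mem_edgeSet_hasse (hX he)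
    have hmem := hXS e he
    rw [← hinfsup] at hmem
    have hinf : e.inf ∈ S := hmem _ (Sym2.mem_mk_left _ _)
    have hsup : e.sup ∈ S := hmem _ (Sym2.mem_mk_right _ _)
    rw [Prod.covBy_iff] at hcov
    by_cases hdir : e.inf.1 = e.sup.1
    · have hlt : e.inf.2 < e.sup.2 := hcov.resolve_left (fun h => h.1.ne hdir) |>.1.lt
      simp only [φ, if_pos hdir, mem_coe, inl_mem_disjSum, R, mem_filter]
      exact ⟨hsup, e.inf, hinf, hdir, hlt⟩
    · obtain ⟨hlt, h2⟩ := hcov.resolve_right (fun h => hdir h.2)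
      simp only [φ, if_neg hdir, mem_coe, inr_mem_disjSum, C, mem_filter]
      exact ⟨hsup, e.inf, hinf, h2, hlt.lt⟩
  have hinj : Set.InjOn φ X := by
    intro e he f hf hef
    refine hasse_prod_edge_eq_of_sup_eq (hX he) (hX hf) ?_ ?_ <;>
      by_cases hde : e.inf.1 = e.sup.1 <;> by_cases hdf : f.inf.1 = f.sup.1 <;>
      simp_all [φ]
  have hcard := card_le_card_of_injOn φ hmaps hinj
  rw [card_disjSum] at hcard
  omega

end ProductOfChains

section Frames

variable {α β : Type*} [DecidableEq α] [DecidableEq β]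

lemma card_le_card_image_fst_mul_card_image_snd (S : Finset (α × β)) :
    #S ≤ #(S.image Prod.fst) * #(S.image Prod.snd) :=
  (card_le_card subset_product).trans_eq (card_product _ _)

lemma card_add_card_add_card_inter_mul_le {S T : Finset (α × β)} (hST : Disjoint S T) :
    #S + #T + #(S.image Prod.fst ∩ T.image Prod.fst) * #(S.image Prod.snd ∩ T.image Prod.snd) ≤
      #(S.image Prod.fst) * #(S.image Prod.snd) + #(T.image Prod.fst) * #(T.image Prod.snd) := by
  set F := S.image Prod.fst ×ˢ S.image Prod.snd
  set F' := T.image Prod.fst ×ˢ T.image Prod.snd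
  have hunion : #S + #T ≤ #(F ∪ F') := by
    rw [← card_union_of_disjoint hST]
    exact card_le_card (union_subset_union subset_product subset_product)
  have hinter : F ∩ F' = (S.image Prod.fst ∩ T.image Prod.fst) ×ˢ
      (S.image Prod.snd ∩ T.image Prod.snd) := product_inter_product
  have := card_union_add_card_inter F F'
  rw [hinter, card_product] at this
  have hF : #F = #(S.image Prod.fst) * #(S.image Prod.snd) := card_product _ _
  have hF' : #F' = #(T.image Prod.fst) * #(T.image Prod.snd) := card_product _ _
  omega

end Frames

lemma add_mul_add_le_of_separated {n m a b c d : ℤ} (hnm : n ≤ m) (ha : 1 ≤ a) (han : a ≤ n)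
    (hb : 1 ≤ b) (hbm : b ≤ m) (hc : 1 ≤ c) (hcn : c ≤ n) (hd : 1 ≤ d) (hdm : d ≤ m)
    (hsep : a + c ≤ n ∨ b + d ≤ m) :
    a * b + c * d + m + 2 * n ≤ m * n + (a + b + c + d) := by
  rcases hsep with hac | hbd
  · nlinarith [mul_le_mul_of_nonneg_left (sub_le_sub_right hbm 1) (sub_nonneg.2 ha),
      mul_le_mul_of_nonneg_left (sub_le_sub_right hdm 1) (sub_nonneg.2 hc)]
  · nlinarith [mul_le_mul_of_nonneg_right (sub_le_sub_right han 1) (sub_nonneg.2 hb),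
      mul_le_mul_of_nonneg_right (sub_le_sub_right hcn 1) (sub_nonneg.2 hd)]

lemma eq_zero_and_eq_zero_or_of_mul_add_mul_lt {x y z w M : ℤ} (hx : 0 ≤ x) (hy : 0 ≤ y)
    (hz : 0 ≤ z) (hw : 0 ≤ w) (hxz : x + z < M) (hyw : y + w < M)
    (h : x * w + y * z + M < x + y + z + w) : x = 0 ∧ y = 0 ∨ z = 0 ∧ w = 0 := by
  rcases hy.eq_or_lt with rfl | hy
  · rcases hx.eq_or_lt with rfl | hx
    · exact .inl ⟨rfl, rfl⟩
    · rcases hw.eq_or_lt with rfl | hw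
      · linarith
      · nlinarith [mul_nonneg (sub_nonneg.2 (Int.add_one_le_iff.2 hx))
          (sub_nonneg.2 (Int.add_one_le_iff.2 hw))]
  rcases hw.eq_or_lt with rfl | hw
  · rcases hz.eq_or_lt with rfl | hz
    · exact .inr ⟨rfl, rfl⟩
    · nlinarith [mul_nonneg (sub_nonneg.2 (Int.add_one_le_iff.2 hy))
          (sub_nonneg.2 (Int.add_one_le_iff.2 hz))]
  · nlinarith

lemma three_mul_mul_add_le {n m c d : ℤ} (hnm : n ≤ m) (hc : 1 ≤ c) (hd : 1 ≤ d)
    (hcd : c + d < n) : 3 * (c * d) + m + 2 * n ≤ m * n + 2 + 2 * (c + d) := by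
  nlinarith [sq_nonneg (c - d), mul_nonneg (sub_nonneg.2 (Int.add_one_le_iff.2 hcd))
    (by linarith : (0 : ℤ) ≤ n - 1 + c + d), mul_nonneg (sub_nonneg.2 hnm)
    (by linarith : (0 : ℤ) ≤ n - 1), sq_nonneg (n - 3)]

lemma three_mul_add_le_or_three_mul_add_le {n m a b c d p q i j : ℕ} (hnm : n ≤ m)
    (ha : 1 ≤ a) (han : a ≤ n) (hb : 1 ≤ b) (hbm : b ≤ m)
    (hc : 1 ≤ c) (hcn : c ≤ n) (hd : 1 ≤ d) (hdm : d ≤ m) (hpab : p ≤ a * b) (hqcd : q ≤ c * d)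
    (hi : a + c ≤ n + i) (hj : b + d ≤ m + j) (hpq : p + q + i * j ≤ a * b + c * d) :
    3 * p + m + 2 * n ≤ m * n + q + 2 * (a + b) ∨ 3 * q + m + 2 * n ≤ m * n + p + 2 * (c + d) := by
  zify at *
  by_contra! h
  obtain ⟨hS, hT⟩ := h
  have hsum : (m : ℤ) * n + (a + b + c + d) < p + q + m + 2 * n := by linarith
  by_cases hsep : (a : ℤ) + c ≤ n ∨ (b : ℤ) + d ≤ m
  · have := add_mul_add_le_of_separated hnm ha han hb hbm hc hcn hd hdm hsep
    nlinarith
  simp only [not_or, not_le] at hsep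
  have hij : ((a : ℤ) + c - n) * (b + d - m) ≤ i * j :=
    mul_le_mul (by linarith) (by linarith) (by linarith) (by positivity)
  -- `ab + cd - (a + c - n)(b + d - m) = nm - (n - a)(m - d) - (m - b)(n - c)`
  have hcorner : ((n : ℤ) - a) * (m - d) + (m - b) * (n - c) + m <
      (n - a) + (m - b) + (n - c) + (m - d) := by
    nlinarith
  rcases eq_zero_and_eq_zero_or_of_mul_add_mul_lt (by linarith) (by linarith) (by linarith)
    (by linarith) (by linarith) (by linarith) hcorner with ⟨ha', hb'⟩ | ⟨hc', hd'⟩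
  · rw [ha', hb'] at hcorner
    have := three_mul_mul_add_le hnm hc hd (by linarith)
    linarith
  · rw [hc', hd'] at hcorner
    have := three_mul_mul_add_le hnm ha hb (by linarith)
    linarith

section Grid

variable {n m : ℕ}

lemma gridGraph_eq_hasse : gridGraph n m = hasse (Fin n × Fin m) := (hasse_prod _ _).symm

lemma three_mul_card_add_le_or {S T : Finset (Fin n × Fin m)} (hnm : n ≤ m) (hST : Disjoint S T)
    (hS : S.Nonempty) (hT : T.Nonempty) :
    3 * #S + m + 2 * n ≤ m * n + #T + 2 * (#(S.image Prod.fst) + #(S.image Prod.snd)) ∨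
    3 * #T + m + 2 * n ≤ m * n + #S + 2 * (#(T.image Prod.fst) + #(T.image Prod.snd)) := by
  have hfst (A : Finset (Fin n)) : #A ≤ n := card_le_univ A |>.trans_eq (Fintype.card_fin n)
  have hsnd (A : Finset (Fin m)) : #A ≤ m := card_le_univ A |>.trans_eq (Fintype.card_fin m)
  have hrows := card_union_add_card_inter (S.image Prod.fst) (T.image Prod.fst)
  have hcols := card_union_add_card_inter (S.image Prod.snd) (T.image Prod.snd)
  refine three_mul_add_le_or_three_mul_add_le hnm
    (card_pos.2 (hS.image _)) (hfst _) (card_pos.2 (hS.image _)) (hsnd _)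
    (card_pos.2 (hT.image _)) (hfst _) (card_pos.2 (hT.image _)) (hsnd _)
    (card_le_card_image_fst_mul_card_image_snd S) (card_le_card_image_fst_mul_card_image_snd T)
    ?_ ?_ (card_add_card_add_card_inter_mul_le hST)
  · linarith [hfst (S.image Prod.fst ∪ T.image Prod.fst)]
  · linarith [hsnd (S.image Prod.snd ∪ T.image Prod.snd)]

lemma two_mul_card_add_le_or {X Y C : Finset (Sym2 (Fin n × Fin m))} (hnm : n ≤ m)
    (hX : ↑X ⊆ (gridGraph n m).edgeSet) (hY : ↑Y ⊆ (gridGraph n m).edgeSet)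
    (hC : ↑C ⊆ (gridGraph n m).edgeSet) (hXne : X.Nonempty) (hYne : Y.Nonempty)
    (hXY : ∀ e ∈ X, ∀ f ∈ Y, ¬ shareVertex e f) (hXC : ∀ e ∈ X, ∀ f ∈ C, ¬ shareVertex e f)
    (hYC : ∀ e ∈ Y, ∀ f ∈ C, ¬ shareVertex e f)
    (hCC : (C : Set (Sym2 (Fin n × Fin m))).Pairwise fun e f => ¬ shareVertex e f) :
    2 * (#C + #X) + m + 2 * n ≤ 2 * (m * n) ∨ 2 * (#C + #Y) + m + 2 * n ≤ 2 * (m * n) := by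
  rw [gridGraph_eq_hasse] at hX hY hC
  have hST := disjoint_edgeSupport hXY
  have hcover : #(edgeSupport X) + #(edgeSupport Y) + #(edgeSupport C) ≤ m * n := by
    rw [← card_union_of_disjoint hST, ← card_union_of_disjoint
      (disjoint_union_left.2 ⟨disjoint_edgeSupport hXC, disjoint_edgeSupport hYC⟩)]
    exact (card_le_univ _).trans_eq (by simp [mul_comm])
  have hCsupp := card_edgeSupport_of_pairwise hC hCC
  have hXsupp := card_add_card_image_fst_add_card_image_snd_le X _ hX
    fun e he _ hv => mem_edgeSupport.2 ⟨e, he, hv⟩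
  have hYsupp := card_add_card_image_fst_add_card_image_snd_le Y _ hY
    fun e he _ hv => mem_edgeSupport.2 ⟨e, he, hv⟩
  have := three_mul_card_add_le_or hnm hST hXne.edgeSupport hYne.edgeSupport
  generalize m * n = N at *
  omega

theorem superLineComplete_gridGraph {r : ℕ} (hnm : n ≤ m) (hr : 2 * (m * n) < 2 * r + m + 2 * n) :
    SuperLineComplete (gridGraph n m) r := by
  classical
  intro A B hA hB hAr hBr hne
  by_contra! hfar
  have hXne : (A \ B).Nonempty :=
    sdiff_nonempty.2 fun h => hne (eq_of_subset_of_card_le h (by omega))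
  have hYne : (B \ A).Nonempty :=
    sdiff_nonempty.2 fun h => hne (eq_of_subset_of_card_le h (by omega)).symm
  have hAsplit : #(A ∩ B) + #(A \ B) = r := by rw [card_inter_add_card_sdiff, hAr]
  have hBsplit : #(A ∩ B) + #(B \ A) = r := by rw [inter_comm, card_inter_add_card_sdiff, hBr]
  have hAB : ∀ e ∈ A \ B, ∀ f ∈ B, ¬ shareVertex e f := fun e he f hf =>
    hfar e (mem_sdiff.1 he).1 f hf (ne_of_mem_of_not_mem hf (mem_sdiff.1 he).2).symm
  have hBA : ∀ e ∈ B \ A, ∀ f ∈ A, ¬ shareVertex e f := fun e he f hf h =>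
    hfar f hf e (mem_sdiff.1 he).1 (ne_of_mem_of_not_mem hf (mem_sdiff.1 he).2)
      (shareVertex_comm.1 h)
  have := two_mul_card_add_le_or hnm ((coe_subset.2 sdiff_subset).trans hA)
    ((coe_subset.2 sdiff_subset).trans hB) ((coe_subset.2 inter_subset_left).trans hA) hXne hYne
    (fun e he f hf => hAB e he f (mem_sdiff.1 hf).1)
    (fun e he f hf => hAB e he f (mem_inter.1 hf).2)
    (fun e he f hf => hBA e he f (mem_inter.1 hf).1)
    (fun e he f hf hef => hfar e (mem_inter.1 he).1 f (mem_inter.1 hf).2 hef)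
  generalize m * n = N at *
  omega

end Grid

lemma not_superLineComplete_of_embeddings {V W : Type*} {G : SimpleGraph V} {H : SimpleGraph W}
    [Fintype H.edgeSet] (f g : H ↪g G) (hfg : ∀ x y, f x ≠ g y) {r : ℕ} (hr0 : 0 < r)
    (hr : r ≤ #H.edgeFinset) : ¬ SuperLineComplete G r := by
  intro hG
  obtain ⟨A, hAH, hAr⟩ := exists_subset_card_eq hr
  let copy (φ : H ↪g G) : Finset (Sym2 V) := A.map ⟨Sym2.map φ, Sym2.map.injective φ.injective⟩
  have hcopy (φ : H ↪g G) : ↑(copy φ) ⊆ G.edgeSet := by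
    intro _ he
    obtain ⟨e, heA, rfl⟩ := mem_map.1 (mem_coe.1 he)
    exact φ.map_mem_edgeSet_iff.2 (mem_edgeFinset.1 (hAH heA))
  have hfar : ∀ e ∈ copy f, ∀ e' ∈ copy g, ¬ shareVertex e e' := by
    simp only [copy, mem_map, Function.Embedding.coeFn_mk]
    rintro _ ⟨e, -, rfl⟩ _ ⟨e', -, rfl⟩ ⟨v, hv, hv'⟩
    obtain ⟨x, -, rfl⟩ := Sym2.mem_map.1 hv
    obtain ⟨y, -, hy⟩ := Sym2.mem_map.1 hv'
    exact hfg x y hy.symm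
  obtain ⟨e, he⟩ := card_pos.1 (hAr ▸ hr0)
  have hne : copy f ≠ copy g := fun h => by
    have hfe : Sym2.map f e ∈ copy f := mem_map_of_mem _ he
    exact hfar _ hfe _ (h ▸ hfe) ⟨_, Sym2.out_fst_mem _, Sym2.out_fst_mem _⟩
  obtain ⟨e, he, e', he', -, hsh⟩ :=
    hG _ _ (hcopy f) (hcopy g) (by simp [copy, hAr]) (by simp [copy, hAr]) hne
  exact hfar e he e' he' hsh

lemma le_card_edgeFinset_gridGraph (n M : ℕ) [Fintype (gridGraph (n + 1) (M + 1)).edgeSet] :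
    (n + 1) * M + n * (M + 1) ≤ #(gridGraph (n + 1) (M + 1)).edgeFinset := by
  let edge : (Fin (n + 1) × Fin M) ⊕ (Fin n × Fin (M + 1)) → Sym2 (Fin (n + 1) × Fin (M + 1))
    | .inl (i, j) => s((i, j.castSucc), (i, j.succ))
    | .inr (i, j) => s((i.castSucc, j), (i.succ, j))
  have hmaps (x) : edge x ∈ (gridGraph (n + 1) (M + 1)).edgeSet := by
    rcases x with ⟨i, j⟩ | ⟨i, j⟩ <;> simp [edge, gridGraph, boxProd_adj, pathGraph_adj]
  have hinj : Function.Injective edge := by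
    rintro (⟨i, j⟩ | ⟨i, j⟩) (⟨i', j'⟩ | ⟨i', j'⟩) h <;>
      simp [edge, Prod.ext_iff, Fin.ext_iff] at h ⊢ <;> omega
  simpa using card_le_card_of_injOn (s := univ) edge (fun x _ => mem_edgeFinset.2 (hmaps x))
    hinj.injOn

def gridColumnShift (n : ℕ) {M m : ℕ} (o : ℕ) (h : o + M ≤ m) : gridGraph n M ↪g gridGraph n m where
  toEmbedding := (Function.Embedding.refl _).prodMap ((Fin.natAddEmb o).trans (Fin.castLEEmb h))
  map_rel_iff' := by
    intro u v
    simp [gridGraph, boxProd_adj, pathGraph_adj, Fin.ext_iff]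
    omega

lemma not_superLineComplete_gridGraph {n M r : ℕ} (hr0 : 0 < r) (hr : r + n + M ≤ 2 * n * M) :
    ¬ SuperLineComplete (gridGraph n (M + M)) r := by
  classical
  obtain _ | n := n
  · omega
  obtain _ | M := M
  · omega
  refine not_superLineComplete_of_embeddings (gridColumnShift _ 0 (by omega))
    (gridColumnShift _ (M + 1) le_rfl) (fun x y h => ?_) hr0
    ((by nlinarith : r ≤ (n + 1) * M + n * (M + 1)).trans (le_card_edgeFinset_gridGraph n M))
  simp [gridColumnShift, Prod.ext_iff, Fin.ext_iff] at h
  omega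

section Isomorphism

variable {V W : Type*} {G : SimpleGraph V} {H : SimpleGraph W}

lemma SuperLineComplete.of_iso (φ : G ≃g H) {r : ℕ} (h : SuperLineComplete G r) :
    SuperLineComplete H r := by
  intro A B hA hB hAr hBr hAB
  let pull : Sym2 W ↪ Sym2 V := ⟨Sym2.map φ.symm, Sym2.map.injective φ.symm.injective⟩
  have hpull {X : Finset (Sym2 W)} (hX : ↑X ⊆ H.edgeSet) : ↑(X.map pull) ⊆ G.edgeSet := by
    intro _ he
    obtain ⟨e, heX, rfl⟩ := mem_map.1 (mem_coe.1 he)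
    exact φ.symm.map_mem_edgeSet_iff.2 (hX heX)
  obtain ⟨_, he, _, hf, hef, v, hve, hvf⟩ := h _ _ (hpull hA) (hpull hB) (by simpa [pull])
    (by simpa [pull]) fun h' => hAB (map_injective pull h')
  obtain ⟨e, heA, rfl⟩ := mem_map.1 he
  obtain ⟨f, hfB, rfl⟩ := mem_map.1 hf
  obtain ⟨x, hx, rfl⟩ := Sym2.mem_map.1 hve
  obtain ⟨y, hy, hxy⟩ := Sym2.mem_map.1 hvf
  exact ⟨e, heA, f, hfB, fun h' => hef (h' ▸ rfl), x, hx, φ.symm.injective hxy ▸ hy⟩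

lemma lcIs.of_iso (φ : G ≃g H) {k : ℕ} (h : lcIs G k) : lcIs H k := by
  have hset : {r | 0 < r ∧ SuperLineComplete G r} = {r | 0 < r ∧ SuperLineComplete H r} :=
    Set.ext fun _ => and_congr_right fun _ => ⟨.of_iso φ, .of_iso φ.symm⟩
  rwa [lcIs, hset] at h

end Isomorphism

theorem lc_grid_even_even (n m : ℕ) (hn : 2 ≤ n) (hm : 2 ≤ m)
    (hne : Even n) (hme : Even m) :
    lcIs (gridGraph n m) (m * n + 1 - (m + n) / 2 - (min m n) / 2) := by
  wlog hnm : n ≤ m generalizing n m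
  · have h := (this m n hm hn hme hne (by omega)).of_iso (boxProdComm _ _)
    rwa [Nat.mul_comm n m, Nat.add_comm n m, min_comm] at h
  obtain ⟨N, rfl⟩ := hne
  obtain ⟨M, rfl⟩ := hme
  have hprod : (M + M) * (N + N) = 4 * (M * N) := by ring
  have hprod' : 2 * (N + N) * M = 4 * (M * N) := by ring
  have hM : M ≤ M * N := Nat.le_mul_of_pos_right M (by omega)
  have hN : N ≤ M * N := Nat.le_mul_of_pos_left N (by omega)
  -- the claimed value is `4MN + 1 - M - 2N`
  rw [min_eq_right hnm, hprod]
  refine ⟨⟨by omega, superLineComplete_gridGraph hnm (by omega)⟩, fun r ⟨hr0, hr⟩ => ?_⟩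
  by_contra! hlt
  exact not_superLineComplete_gridGraph hr0 (by omega) hr
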